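/- For the distributed secondary controller system ẋ = A x with x = (ω, V, η) ∈ ℝ^{3n}, the time derivative of W(ω,V,η) = (1/2)ω^T K^ω (K^V)^{-1} M^{-1} ω + (V^nom/2) V^T C V + (1/2)η^T η along trajectories equals -[ω;V]^T Q1 [ω;V] - δ η^T L_c η, which is nonpositive, and vanishes only when ω = 0, V = 0 and η is a multiple of the all-ones vector. -/

import Mathlib

/-!
All gain matrices are diagonal, so the weight `K^ω (K^V)⁻¹ M⁻¹` of `W` cancels `M`
and `C` cancels `E`; along the flow the coupling terms `∓ ωᵀ K^{droop,I} η` of the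
`ω`- and `η`-equations then cancel, and `Ẇ = -Q` is a coordinatewise identity.
Completing the square in each coordinate,
`ωᵀ K^ω (K^V)⁻¹ (K^ω + K^droop) ω - 2 ωᵀ K^ω V + Vᵀ K^V V` is
`∑ᵢ k^V_i (k^ω_i / k^V_i ω_i - V_i)² + k^ω_i k^droop_i / k^V_i ω_i²`,
positive definite in `(ω, V)`, while a weighted Laplacian form is
`½ ∑ w_ij (x_i - x_j)²`, which on a connected graph vanishes exactly at the constant vectors.
-/

open Matrix

variable {ι : Type*} [Fintype ι]

section Derivatives

variable {𝕜 E F : Type*} [NontriviallyNormedField 𝕜] [NormedAddCommGroup E]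
  [NormedSpace 𝕜 E] [NormedAddCommGroup F] [NormedSpace 𝕜 F] {t : 𝕜}

theorem HasDerivAt.fst {x : 𝕜 → E × F} {x' : E × F} (h : HasDerivAt x x' t) :
    HasDerivAt (fun s => (x s).1) x'.1 t :=
  (ContinuousLinearMap.fst 𝕜 E F).hasFDerivAt.comp_hasDerivAt t h

theorem HasDerivAt.snd {x : 𝕜 → E × F} {x' : E × F} (h : HasDerivAt x x' t) :
    HasDerivAt (fun s => (x s).2) x'.2 t :=
  (ContinuousLinearMap.snd 𝕜 E F).hasFDerivAt.comp_hasDerivAt t h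

variable {u v : 𝕜 → ι → 𝕜} {u' v' : ι → 𝕜}

theorem HasDerivAt.dotProduct (hu : HasDerivAt u u' t) (hv : HasDerivAt v v' t) :
    HasDerivAt (fun s => u s ⬝ᵥ v s) (u' ⬝ᵥ v t + u t ⬝ᵥ v') t := by
  have := HasDerivAt.fun_sum (u := Finset.univ) fun i _ =>
    (hasDerivAt_pi.1 hu i).fun_mul (hasDerivAt_pi.1 hv i)
  rw [Finset.sum_add_distrib] at this
  exact this

theorem HasDerivAt.mulVec {κ : Type*} (A : Matrix κ ι 𝕜) (hu : HasDerivAt u u' t) :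
    HasDerivAt (fun s => A *ᵥ u s) (A *ᵥ u') t :=
  hasDerivAt_pi.2 fun i => HasDerivAt.fun_sum fun j _ =>
    (hasDerivAt_pi.1 hu j).const_mul (A i j)

theorem HasDerivAt.dotProduct_mulVec_self {A : Matrix ι ι 𝕜} (hA : Aᵀ = A)
    (hu : HasDerivAt u u' t) :
    HasDerivAt (fun s => u s ⬝ᵥ (A *ᵥ u s)) (2 * (u t ⬝ᵥ (A *ᵥ u'))) t := by
  convert hu.dotProduct (hu.mulVec A) using 1
  rw [dotProduct_mulVec, ← mulVec_transpose, hA, dotProduct_comm, two_mul]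

theorem HasDerivAt.dotProduct_self (hu : HasDerivAt u u' t) :
    HasDerivAt (fun s => u s ⬝ᵥ u s) (2 * (u t ⬝ᵥ u')) t := by
  convert hu.dotProduct hu using 1
  rw [dotProduct_comm u', two_mul]

end Derivatives

section Laplacian

variable [DecidableEq ι] {w : ι → ι → ℝ}

def weightedLaplacian (w : ι → ι → ℝ) : Matrix ι ι ℝ :=
  of fun i j => if i = j then ∑ k, w i k else -(w i j)

theorem weightedLaplacian_mulVec_apply (hdiag : ∀ i, w i i = 0) (x : ι → ℝ) (i : ι) :
    (weightedLaplacian w *ᵥ x) i = ∑ j, w i j * (x i - x j) := by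
  have hrow : ∀ j, weightedLaplacian w i j * x j
      = (if i = j then (∑ k, w i k) * x j else 0) - w i j * x j := by
    intro j
    rcases eq_or_ne i j with rfl | hij
    · simp [weightedLaplacian, hdiag]
    · simp [weightedLaplacian, hij]
  simp only [mulVec, dotProduct, hrow, Finset.sum_sub_distrib, Finset.sum_ite_eq,
    Finset.mem_univ, if_true, Finset.sum_mul, mul_sub]

theorem dotProduct_weightedLaplacian_mulVec (hsymm : ∀ i j, w i j = w j i)
    (hdiag : ∀ i, w i i = 0) (x : ι → ℝ) :
    x ⬝ᵥ (weightedLaplacian w *ᵥ x) = (∑ i, ∑ j, w i j * (x i - x j) ^ 2) / 2 := by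
  have hswap : ∑ i, ∑ j, w i j * (x i * (x i - x j))
      = ∑ i, ∑ j, w i j * (x j * (x j - x i)) := by
    rw [Finset.sum_comm]
    simp only [hsymm]
  have hdouble : 2 * ∑ i, ∑ j, w i j * (x i * (x i - x j))
      = ∑ i, ∑ j, w i j * (x i - x j) ^ 2 := by
    rw [two_mul]
    nth_rewrite 2 [hswap]
    simp only [← Finset.sum_add_distrib]
    congr! 2 with i _ j _
    ring
  calc x ⬝ᵥ (weightedLaplacian w *ᵥ x) = ∑ i, ∑ j, w i j * (x i * (x i - x j)) := by
        simp only [dotProduct, weightedLaplacian_mulVec_apply hdiag, Finset.mul_sum,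
          mul_left_comm]
    _ = _ := by rw [← hdouble]; ring

theorem dotProduct_weightedLaplacian_mulVec_nonneg (hsymm : ∀ i j, w i j = w j i)
    (hnonneg : ∀ i j, 0 ≤ w i j) (hdiag : ∀ i, w i i = 0) (x : ι → ℝ) :
    0 ≤ x ⬝ᵥ (weightedLaplacian w *ᵥ x) := by
  rw [dotProduct_weightedLaplacian_mulVec hsymm hdiag]
  exact div_nonneg (Finset.sum_nonneg fun i _ => Finset.sum_nonneg fun j _ =>
    mul_nonneg (hnonneg i j) (sq_nonneg _)) zero_le_two

theorem dotProduct_weightedLaplacian_mulVec_eq_zero_iff (hsymm : ∀ i j, w i j = w j i)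
    (hnonneg : ∀ i j, 0 ≤ w i j) (hdiag : ∀ i, w i i = 0)
    (hconn : ∀ i j, Relation.ReflTransGen (fun a b => 0 < w a b) i j) (x : ι → ℝ) :
    x ⬝ᵥ (weightedLaplacian w *ᵥ x) = 0 ↔ ∃ k, x = fun _ => k := by
  constructor
  · intro h
    have hterm : ∀ i j, w i j * (x i - x j) ^ 2 = 0 := by
      rw [dotProduct_weightedLaplacian_mulVec hsymm hdiag, div_eq_zero_iff,
        or_iff_left two_ne_zero, Finset.sum_eq_zero_iff_of_nonneg fun i _ =>
          Finset.sum_nonneg fun j _ => mul_nonneg (hnonneg i j) (sq_nonneg _)] at h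
      intro i j
      exact (Finset.sum_eq_zero_iff_of_nonneg fun j _ => mul_nonneg (hnonneg i j)
        (sq_nonneg _)).1 (h i (Finset.mem_univ i)) j (Finset.mem_univ j)
    have hedge : ∀ i j, 0 < w i j → x i = x j := fun i j hij => by
      simpa [hij.ne', sub_eq_zero] using hterm i j
    have hconst : ∀ i j, x i = x j := fun i j => by
      induction hconn i j with
      | refl => rfl
      | tail _ hbc ih => exact ih.trans (hedge _ _ hbc)
    rcases isEmpty_or_nonempty ι with hι | ⟨⟨i₀⟩⟩
    · exact ⟨0, Subsingleton.elim _ _⟩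
    · exact ⟨x i₀, funext fun i => hconst i i₀⟩
  · rintro ⟨k, rfl⟩
    simp [dotProduct_weightedLaplacian_mulVec hsymm hdiag]

end Laplacian

theorem inv_diagonal_of_ne_zero {K : Type*} [Field K] [DecidableEq ι] {d : ι → K}
    (hd : ∀ i, d i ≠ 0) :
    (diagonal d)⁻¹ = diagonal fun i => (d i)⁻¹ := by
  apply inv_eq_right_inv
  simp [diagonal_mul_diagonal, hd]

theorem mul_sq_add_mul_sq_eq_zero_iff {R : Type*} [Ring R] [LinearOrder R] [IsStrictOrderedRing R]
    {a b x y : R} (ha : 0 < a) (hb : 0 < b) :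
    a * x ^ 2 + b * y ^ 2 = 0 ↔ x = 0 ∧ y = 0 := by
  rw [add_eq_zero_iff_of_nonneg (by positivity) (by positivity)]
  simp [ha.ne', hb.ne']

section Droop

variable {kw kV kd : ι → ℝ}

noncomputable def droopDissipation (kw kV kd ω V : ι → ℝ) : ℝ :=
  ∑ i, (kV i * (kw i / kV i * ω i - V i) ^ 2 + kw i * kd i / kV i * ω i ^ 2)

theorem droopDissipation_add_mul_dotProduct_mulVec [DecidableEq ι] (hkV : ∀ i, kV i ≠ 0)
    (L : Matrix ι ι ℝ) (a : ℝ) (ω V : ι → ℝ) :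
    droopDissipation kw kV kd ω V + a * (V ⬝ᵥ (L *ᵥ V))
      = ω ⬝ᵥ ((diagonal kw * (diagonal kV)⁻¹ * (diagonal kw + diagonal kd)) *ᵥ ω)
        - 2 * (ω ⬝ᵥ (diagonal kw *ᵥ V)) + V ⬝ᵥ ((a • L + diagonal kV) *ᵥ V) := by
  rw [add_mulVec, smul_mulVec, dotProduct_add, dotProduct_smul, smul_eq_mul]
  simp only [inv_diagonal_of_ne_zero hkV, diagonal_add, diagonal_mul_diagonal, dotProduct,
    mulVec_diagonal, Finset.mul_sum, ← Finset.sum_sub_distrib, ← Finset.sum_add_distrib,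
    droopDissipation]
  refine Finset.sum_congr rfl fun i _ => ?_
  field_simp [hkV i]
  ring

theorem droopDissipation_nonneg (hkw : ∀ i, 0 < kw i) (hkV : ∀ i, 0 < kV i)
    (hkd : ∀ i, 0 < kd i) (ω V : ι → ℝ) : 0 ≤ droopDissipation kw kV kd ω V :=
  Finset.sum_nonneg fun i _ => by
    have := hkw i; have := hkV i; have := hkd i
    positivity

theorem droopDissipation_eq_zero_iff (hkw : ∀ i, 0 < kw i) (hkV : ∀ i, 0 < kV i)
    (hkd : ∀ i, 0 < kd i) (ω V : ι → ℝ) :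
    droopDissipation kw kV kd ω V = 0 ↔ ω = 0 ∧ V = 0 := by
  have hcoeff : ∀ i, 0 < kw i * kd i / kV i := fun i =>
    div_pos (mul_pos (hkw i) (hkd i)) (hkV i)
  rw [droopDissipation, Finset.sum_eq_zero_iff_of_nonneg fun i _ => by
    have := hkV i; have := hcoeff i; positivity]
  simp only [Finset.mem_univ, true_implies, mul_sq_add_mul_sq_eq_zero_iff (hkV _) (hcoeff _),
    funext_iff, Pi.zero_apply, ← forall_and]
  refine forall_congr' fun i => ?_
  constructor
  · rintro ⟨h, hω⟩
    simpa [hω, eq_comm] using h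
  · rintro ⟨hω, hV⟩
    simp [hω, hV]

end Droop

theorem lyapunov_derivative_along_field_eq [DecidableEq ι] {m c kw kV kd kdI : ι → ℝ}
    (hm : ∀ i, m i ≠ 0) (hc : ∀ i, c i ≠ 0) (hkw : ∀ i, kw i ≠ 0) (hkV : ∀ i, kV i ≠ 0)
    {Vnom : ℝ} (hVnom : Vnom ≠ 0) (LR Lc : Matrix ι ι ℝ) (δ : ℝ) (ω V η : ι → ℝ) :
    ω ⬝ᵥ ((diagonal kw * (diagonal kV)⁻¹ * (diagonal fun i => (m i)⁻¹)⁻¹) *ᵥ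
        (diagonal (fun i => (m i)⁻¹) *ᵥ (-((diagonal kw + diagonal kd) *ᵥ ω)
          + diagonal kV *ᵥ V - (diagonal kV * (diagonal kw)⁻¹ * diagonal kdI) *ᵥ η)))
      + Vnom * (V ⬝ᵥ (diagonal c *ᵥ (diagonal (fun i => (c i)⁻¹) *ᵥ
          (Vnom⁻¹ • (diagonal kw *ᵥ ω) - (LR + Vnom⁻¹ • diagonal kV) *ᵥ V))))
      + η ⬝ᵥ (diagonal kdI *ᵥ ω - δ • (Lc *ᵥ η))
    = -(ω ⬝ᵥ ((diagonal kw * (diagonal kV)⁻¹ * (diagonal kw + diagonal kd)) *ᵥ ω)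
        - 2 * (ω ⬝ᵥ (diagonal kw *ᵥ V)) + V ⬝ᵥ ((Vnom • LR + diagonal kV) *ᵥ V)
        + δ * (η ⬝ᵥ (Lc *ᵥ η))) := by
  simp only [inv_diagonal_of_ne_zero hkV, inv_diagonal_of_ne_zero hkw,
    inv_diagonal_of_ne_zero fun i => inv_ne_zero (hm i), diagonal_mul_diagonal, diagonal_add,
    add_mulVec, smul_mulVec, dotProduct, mulVec_diagonal, Pi.add_apply, Pi.sub_apply,
    Pi.neg_apply, Pi.smul_apply, smul_eq_mul, Finset.mul_sum, ← Finset.sum_sub_distrib,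
    ← Finset.sum_add_distrib, ← Finset.sum_neg_distrib]
  refine Finset.sum_congr rfl fun i _ => ?_
  field_simp [hm i, hc i, hkw i, hkV i, hVnom]
  ring

theorem distributed_secondary_lyapunov_derivative_general {n : ℕ}
    (m c kw kV kd kdI : Fin n → ℝ)
    (hm : ∀ i, 0 < m i) (hc : ∀ i, 0 < c i)
    (hkw : ∀ i, 0 < kw i) (hkV : ∀ i, 0 < kV i) (hkd : ∀ i, 0 < kd i)
    (M C E Kw KV Kd KdI : Matrix (Fin n) (Fin n) ℝ)
    (hM : M = Matrix.diagonal fun i => (m i)⁻¹)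
    (hC : C = Matrix.diagonal c)
    (hE : E = Matrix.diagonal fun i => (c i)⁻¹)
    (hKw : Kw = Matrix.diagonal kw) (hKV : KV = Matrix.diagonal kV)
    (hKd : Kd = Matrix.diagonal kd) (hKdI : KdI = Matrix.diagonal kdI)
    -- connected weighted Laplacian L_R
    (w : Fin n → Fin n → ℝ)
    (hw_symm : ∀ i j, w i j = w j i) (hw_nonneg : ∀ i j, 0 ≤ w i j)
    (hw_diag : ∀ i, w i i = 0)
    (LR : Matrix (Fin n) (Fin n) ℝ)
    (hLR : LR = Matrix.of fun i j => if i = j then ∑ k, w i k else -(w i j))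
    -- connected communication Laplacian L_c with symmetric positive weights
    (cw : Fin n → Fin n → ℝ)
    (hcw_symm : ∀ i j, cw i j = cw j i) (hcw_nonneg : ∀ i j, 0 ≤ cw i j)
    (hcw_diag : ∀ i, cw i i = 0)
    (hcconn : ∀ i j : Fin n, Relation.ReflTransGen (fun a b => 0 < cw a b) i j)
    (Lc : Matrix (Fin n) (Fin n) ℝ)
    (hLc : Lc = Matrix.of fun i j => if i = j then ∑ k, cw i k else -(cw i j))
    (Vnom δ : ℝ) (hVnom : 0 < Vnom) (hδ : 0 < δ)
    -- the closed-loop vector field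
    (f : (Fin n → ℝ) × (Fin n → ℝ) × (Fin n → ℝ) →
      (Fin n → ℝ) × (Fin n → ℝ) × (Fin n → ℝ))
    (hf : f = fun p =>
      (M *ᵥ (-((Kw + Kd) *ᵥ p.1) + KV *ᵥ p.2.1 - (KV * Kw⁻¹ * KdI) *ᵥ p.2.2),
       E *ᵥ (Vnom⁻¹ • (Kw *ᵥ p.1) - (LR + Vnom⁻¹ • KV) *ᵥ p.2.1),
       KdI *ᵥ p.1 - δ • (Lc *ᵥ p.2.2)))
    -- the Lyapunov function
    (W : (Fin n → ℝ) × (Fin n → ℝ) × (Fin n → ℝ) → ℝ)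
    (hW : W = fun p => (1/2) * (p.1 ⬝ᵥ ((Kw * KV⁻¹ * M⁻¹) *ᵥ p.1))
        + (Vnom / 2) * (p.2.1 ⬝ᵥ (C *ᵥ p.2.1)) + (1/2) * (p.2.2 ⬝ᵥ p.2.2))
    -- the dissipation rate `[ω;V]ᵀ Q1 [ω;V] + δ ηᵀ L_c η`
    (Qf : (Fin n → ℝ) × (Fin n → ℝ) × (Fin n → ℝ) → ℝ)
    (hQf : Qf = fun p => p.1 ⬝ᵥ ((Kw * KV⁻¹ * (Kw + Kd)) *ᵥ p.1)
        - 2 * (p.1 ⬝ᵥ (Kw *ᵥ p.2.1))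
        + p.2.1 ⬝ᵥ ((Vnom • LR + KV) *ᵥ p.2.1) + δ * (p.2.2 ⬝ᵥ (Lc *ᵥ p.2.2))) :
    (∀ x : ℝ → (Fin n → ℝ) × (Fin n → ℝ) × (Fin n → ℝ),
      (∀ t, HasDerivAt x (f (x t)) t) →
        ∀ t, HasDerivAt (fun s => W (x s)) (-(Qf (x t))) t) ∧
    (∀ p, -(Qf p) ≤ 0) ∧
    (∀ p, -(Qf p) = 0 ↔ p.1 = 0 ∧ p.2.1 = 0 ∧ ∃ k : ℝ, p.2.2 = fun _ => k) := by
  subst hM hC hE hKw hKV hKd hKdI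
  obtain rfl : LR = weightedLaplacian w := hLR
  obtain rfl : Lc = weightedLaplacian cw := hLc
  have hQ : ∀ p, Qf p = droopDissipation kw kV kd p.1 p.2.1
      + Vnom * (p.2.1 ⬝ᵥ (weightedLaplacian w *ᵥ p.2.1))
      + δ * (p.2.2 ⬝ᵥ (weightedLaplacian cw *ᵥ p.2.2)) := fun p => by
    simp only [hQf, droopDissipation_add_mul_dotProduct_mulVec fun i => (hkV i).ne']
  have hVterm : ∀ V, 0 ≤ Vnom * (V ⬝ᵥ (weightedLaplacian w *ᵥ V)) := fun V =>
    mul_nonneg hVnom.le (dotProduct_weightedLaplacian_mulVec_nonneg hw_symm hw_nonneg hw_diag V)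
  have hηterm : ∀ η, 0 ≤ δ * (η ⬝ᵥ (weightedLaplacian cw *ᵥ η)) := fun η =>
    mul_nonneg hδ.le (dotProduct_weightedLaplacian_mulVec_nonneg hcw_symm hcw_nonneg hcw_diag η)
  have hωVterm := droopDissipation_nonneg hkw hkV hkd
  refine ⟨fun x hx t => ?_, fun p => ?_, fun p => ?_⟩
  · subst hf hW hQf
    refine ((((hx t).fst.dotProduct_mulVec_self (by
      simp only [inv_diagonal, diagonal_mul_diagonal, diagonal_transpose])).const_mul (1 / 2)).add
      (((hx t).snd.fst.dotProduct_mulVec_self (diagonal_transpose c)).const_mul (Vnom / 2))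
      |>.add (((hx t).snd.snd.dotProduct_self).const_mul (1 / 2))).congr_deriv ?_
    beta_reduce
    rw [← lyapunov_derivative_along_field_eq (fun i => (hm i).ne') (fun i => (hc i).ne')
      (fun i => (hkw i).ne') (fun i => (hkV i).ne') hVnom.ne']
    ring
  · rw [neg_nonpos, hQ]
    linarith [hωVterm p.1 p.2.1, hVterm p.2.1, hηterm p.2.2]
  · rw [neg_eq_zero, hQ, add_eq_zero_iff_of_nonneg (add_nonneg (hωVterm _ _) (hVterm _))
      (hηterm _), add_eq_zero_iff_of_nonneg (hωVterm _ _) (hVterm _),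
      droopDissipation_eq_zero_iff hkw hkV hkd, mul_eq_zero_iff_left hVnom.ne',
      mul_eq_zero_iff_left hδ.ne',
      dotProduct_weightedLaplacian_mulVec_eq_zero_iff hcw_symm hcw_nonneg hcw_diag hcconn]
    aesop

/-- For the distributed secondary controller system `ẋ = A x`,
`x = (ω, V, η) ∈ ℝ³ⁿ`, the time derivative of
`W(ω,V,η) = ½ ωᵀ K^ω (K^V)⁻¹ M⁻¹ ω + (V^nom/2) Vᵀ C V + ½ ηᵀη`
along trajectories equals `-[ω;V]ᵀ Q1 [ω;V] - δ ηᵀ L_c η`, which is nonpositive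
and vanishes only when `ω = 0`, `V = 0` and `η` is a multiple of the all-ones vector. -/
theorem distributed_secondary_lyapunov_derivative {n : ℕ} (hn : 0 < n)
    (m c kw kV kd kdI : Fin n → ℝ)
    (hm : ∀ i, 0 < m i) (hc : ∀ i, 0 < c i)
    (hkw : ∀ i, 0 < kw i) (hkV : ∀ i, 0 < kV i) (hkd : ∀ i, 0 < kd i)
    (hkdI : ∀ i, 0 < kdI i)
    (M C E Kw KV Kd KdI : Matrix (Fin n) (Fin n) ℝ)
    (hM : M = Matrix.diagonal fun i => (m i)⁻¹)
    (hC : C = Matrix.diagonal c)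
    (hE : E = Matrix.diagonal fun i => (c i)⁻¹)
    (hKw : Kw = Matrix.diagonal kw) (hKV : KV = Matrix.diagonal kV)
    (hKd : Kd = Matrix.diagonal kd) (hKdI : KdI = Matrix.diagonal kdI)
    -- connected weighted Laplacian L_R
    (w : Fin n → Fin n → ℝ)
    (hw_symm : ∀ i j, w i j = w j i) (hw_nonneg : ∀ i j, 0 ≤ w i j)
    (hw_diag : ∀ i, w i i = 0)
    (hconn : ∀ i j : Fin n, Relation.ReflTransGen (fun a b => 0 < w a b) i j)
    (LR : Matrix (Fin n) (Fin n) ℝ)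
    (hLR : LR = Matrix.of fun i j => if i = j then ∑ k, w i k else -(w i j))
    -- connected communication Laplacian L_c with symmetric positive weights
    (cw : Fin n → Fin n → ℝ)
    (hcw_symm : ∀ i j, cw i j = cw j i) (hcw_nonneg : ∀ i j, 0 ≤ cw i j)
    (hcw_diag : ∀ i, cw i i = 0)
    (hcconn : ∀ i j : Fin n, Relation.ReflTransGen (fun a b => 0 < cw a b) i j)
    (Lc : Matrix (Fin n) (Fin n) ℝ)
    (hLc : Lc = Matrix.of fun i j => if i = j then ∑ k, cw i k else -(cw i j))
    (Vnom δ : ℝ) (hVnom : 0 < Vnom) (hδ : 0 < δ)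
    -- the closed-loop vector field
    (f : (Fin n → ℝ) × (Fin n → ℝ) × (Fin n → ℝ) →
      (Fin n → ℝ) × (Fin n → ℝ) × (Fin n → ℝ))
    (hf : f = fun p =>
      (M *ᵥ (-((Kw + Kd) *ᵥ p.1) + KV *ᵥ p.2.1 - (KV * Kw⁻¹ * KdI) *ᵥ p.2.2),
       E *ᵥ (Vnom⁻¹ • (Kw *ᵥ p.1) - (LR + Vnom⁻¹ • KV) *ᵥ p.2.1),
       KdI *ᵥ p.1 - δ • (Lc *ᵥ p.2.2)))
    -- the Lyapunov function
    (W : (Fin n → ℝ) × (Fin n → ℝ) × (Fin n → ℝ) → ℝ)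
    (hW : W = fun p => (1/2) * (p.1 ⬝ᵥ ((Kw * KV⁻¹ * M⁻¹) *ᵥ p.1))
        + (Vnom / 2) * (p.2.1 ⬝ᵥ (C *ᵥ p.2.1)) + (1/2) * (p.2.2 ⬝ᵥ p.2.2))
    -- the dissipation rate `[ω;V]ᵀ Q1 [ω;V] + δ ηᵀ L_c η`
    (Qf : (Fin n → ℝ) × (Fin n → ℝ) × (Fin n → ℝ) → ℝ)
    (hQf : Qf = fun p => p.1 ⬝ᵥ ((Kw * KV⁻¹ * (Kw + Kd)) *ᵥ p.1)
        - 2 * (p.1 ⬝ᵥ (Kw *ᵥ p.2.1))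
        + p.2.1 ⬝ᵥ ((Vnom • LR + KV) *ᵥ p.2.1) + δ * (p.2.2 ⬝ᵥ (Lc *ᵥ p.2.2))) :
    (∀ x : ℝ → (Fin n → ℝ) × (Fin n → ℝ) × (Fin n → ℝ),
      (∀ t, HasDerivAt x (f (x t)) t) →
        ∀ t, HasDerivAt (fun s => W (x s)) (-(Qf (x t))) t) ∧
    (∀ p, -(Qf p) ≤ 0) ∧
    (∀ p, -(Qf p) = 0 ↔ p.1 = 0 ∧ p.2.1 = 0 ∧ ∃ k : ℝ, p.2.2 = fun _ => k) :=
  distributed_secondary_lyapunov_derivative_general m c kw kV kd kdI hm hc hkw hkV hkd M C E Kw KV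
    Kd KdI hM hC hE hKw hKV hKd hKdI w hw_symm hw_nonneg hw_diag LR hLR cw hcw_symm hcw_nonneg
    hcw_diag hcconn Lc hLc Vnom δ hVnom hδ f hf W hW Qf hQf
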